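/- Let α be an antichain of size m in [n]×[m], 1 ≤ m ≤ n−1, and let M, N, M′, N′ be reduced reverse column echelon matrices with pivot-set α. Suppose there exist invertible upper triangular matrices G, H, K with M′ = G·M·Hᵀ and N′ = G·N·Kᵀ. Then Piv(M−N) = Piv(M′−N′). -/

import Mathlib

open Matrix

namespace SchubertCell

/-- The strict down-set of a subset of a poset. -/
def Down {X : Type*} [Preorder X] (Y : Set X) : Set X := {x | ∃ y ∈ Y, x < y}

variable {F : Type*} [Field F] {n : ℕ}

/-- The pivot-set of a matrix: the maximal elements of the support
under the componentwise (product) order on indices. -/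
def Piv (M : Matrix (Fin n) (Fin n) F) : Set (Fin n × Fin n) :=
  {p | M p.1 p.2 ≠ 0 ∧ ∀ q : Fin n × Fin n, p < q → M q.1 q.2 = 0}

/-- Upper triangular matrix. -/
def UpperTri (G : Matrix (Fin n) (Fin n) F) : Prop := ∀ i j : Fin n, j < i → G i j = 0

/-- `M i j` is the last (largest row index) nonzero entry of column `j`. -/
def IsLast (M : Matrix (Fin n) (Fin n) F) (i j : Fin n) : Prop :=
  M i j ≠ 0 ∧ ∀ i' : Fin n, i < i' → M i' j = 0

/-- Reduced reverse column echelon form: (CE1), (CE2), (CE3). -/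
def IsRRCEF (M : Matrix (Fin n) (Fin n) F) : Prop :=
  (∀ j j' : Fin n, j ≤ j' → (∃ i, M i j' ≠ 0) → ∃ i, M i j ≠ 0) ∧
  (∀ i j i' j' : Fin n, IsLast M i j → IsLast M i' j' → j < j' → i' < i) ∧
  (∀ i j : Fin n, IsLast M i j → M i j = 1 ∧ ∀ j' : Fin n, j' ≠ j → M i j' = 0)

/-- `D(α)`: elements of the strict down-set of `α` whose row contains no element of `α`. -/
def DSet (α : Set (Fin n × Fin n)) : Set (Fin n × Fin n) :=
  {p | p ∈ Down α ∧ ∀ k : Fin n, (p.1, k) ∉ α}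

/-!
Write `D = M - N` and `U = K H⁻¹`, so that `M' - N' = G D Kᵀ + M' (1 - U)ᵀ`. Two-sided
multiplication by invertible upper triangular matrices keeps every pivot of `D`, since the entry
`(a, b)` of `G D Kᵀ` only sees the entries `(x, y) ≥ (a, b)` of `D`. On a row `r` carrying a pivot
`(r, c) ∈ α` both `M'` and `N'` are the unit vector `e_c`, so the identity read on that row says that
column `c` of `1 - U` is minus row `r` of `G D Kᵀ`. Above a pivot `(i, j)` of `D` these rows vanish,
because row `i` carries no element of `α` (there `M` and `N` coincide); hence `M' - N'` agrees with
`G D Kᵀ` above `(i, j)`, and `(i, j)` is a pivot of `M' - N'`. The reverse inclusion is the same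
argument for `M = G⁻¹ M' H⁻ᵀ` and `N = G⁻¹ N' K⁻ᵀ`.
-/

lemma mem_piv_of_eqOn_ge {A B : Matrix (Fin n) (Fin n) F} {p : Fin n × Fin n}
    (hAB : ∀ q, p ≤ q → A q.1 q.2 = B q.1 q.2) (hp : p ∈ Piv A) : p ∈ Piv B :=
  ⟨hAB p le_rfl ▸ hp.1, fun q hq => hAB q hq.le ▸ hp.2 q hq⟩

section Triangular

variable {G K : Matrix (Fin n) (Fin n) F}

lemma UpperTri.isUpperTriangular (hG : UpperTri G) : G.IsUpperTriangular :=
  fun i j h => hG i j h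

lemma UpperTri.inv (hG : UpperTri G) : UpperTri G⁻¹ := by
  by_cases hdet : IsUnit G.det
  · have : Invertible G := G.invertibleOfIsUnitDet hdet
    exact fun i j h => blockTriangular_inv_of_blockTriangular hG.isUpperTriangular h
  · rw [nonsing_inv_apply_not_isUnit G hdet]
    exact fun _ _ _ => rfl

lemma UpperTri.diag_ne_zero (hGt : UpperTri G) (hG : IsUnit G) (i : Fin n) : G i i ≠ 0 := by
  have hdet := ((isUnit_iff_isUnit_det G).mp hG).ne_zero
  rw [det_of_isUpperTriangular hGt.isUpperTriangular, Finset.prod_ne_zero_iff] at hdet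
  exact hdet i (Finset.mem_univ i)

lemma UpperTri.mul_mul_transpose_apply (hG : UpperTri G) (hK : UpperTri K)
    (D : Matrix (Fin n) (Fin n) F) (a b : Fin n) :
    (G * D * Kᵀ) a b = ∑ q ∈ {q | (a, b) ≤ q}, G a q.1 * D q.1 q.2 * K b q.2 := by
  simp only [mul_apply, transpose_apply, Finset.sum_mul, Finset.sum_filter]
  rw [Finset.sum_comm, ← Finset.univ_product_univ, Finset.sum_product]
  refine Finset.sum_congr rfl fun x _ => Finset.sum_congr rfl fun y _ => ?_
  split_ifs with h
  · rfl
  · rcases not_and_or.mp (Prod.mk_le_mk.not.mp h) with hx | hy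
    · rw [hG a x (not_le.mp hx), zero_mul, zero_mul]
    · rw [hK b y (not_le.mp hy), mul_zero]

lemma UpperTri.exists_ne_zero_of_mul_mul_transpose_ne_zero (hG : UpperTri G) (hK : UpperTri K)
    {D : Matrix (Fin n) (Fin n) F} {a b : Fin n} (h : (G * D * Kᵀ) a b ≠ 0) :
    ∃ q : Fin n × Fin n, (a, b) ≤ q ∧ D q.1 q.2 ≠ 0 := by
  rw [hG.mul_mul_transpose_apply hK] at h
  obtain ⟨q, hq, hne⟩ := Finset.exists_ne_zero_of_sum_ne_zero h
  exact ⟨q, (Finset.mem_filter.mp hq).2, fun h0 => hne (by rw [h0, mul_zero, zero_mul])⟩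

lemma UpperTri.mem_piv_mul_mul_transpose (hGt : UpperTri G) (hKt : UpperTri K)
    (hG : IsUnit G) (hK : IsUnit K) {D : Matrix (Fin n) (Fin n) F} {p : Fin n × Fin n}
    (hp : p ∈ Piv D) : p ∈ Piv (G * D * Kᵀ) := by
  refine ⟨?_, fun q hpq => by_contra fun hq => ?_⟩
  · rw [hGt.mul_mul_transpose_apply hKt, Finset.sum_eq_single_of_mem p (by simp)]
    · exact mul_ne_zero (mul_ne_zero (hGt.diag_ne_zero hG _) hp.1) (hKt.diag_ne_zero hK _)
    · intro q hq hqp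
      rw [hp.2 q (lt_of_le_of_ne (Finset.mem_filter.mp hq).2 (Ne.symm hqp)), mul_zero, zero_mul]
  · obtain ⟨q', hqq', hq'⟩ := hGt.exists_ne_zero_of_mul_mul_transpose_ne_zero hKt hq
    exact hq' (hp.2 q' (lt_of_lt_of_le hpq hqq'))

end Triangular

section Echelon

variable {M : Matrix (Fin n) (Fin n) F}

lemma exists_le_isLast {a b : Fin n} (h : M a b ≠ 0) : ∃ r, a ≤ r ∧ IsLast M r b := by
  classical
  obtain ⟨r, hr, hmax⟩ := ({x | M x b ≠ 0} : Finset (Fin n)).exists_max_image id ⟨a, by simpa⟩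
  refine ⟨r, hmax a (by simpa), (Finset.mem_filter.mp hr).2, fun i hi => ?_⟩
  by_contra h0
  exact (hmax i (by simpa)).not_gt hi

lemma isLast_of_mem_piv {r b : Fin n} (h : (r, b) ∈ Piv M) : IsLast M r b :=
  ⟨h.1, fun a ha => h.2 (a, b) (Prod.mk_lt_mk.mpr (Or.inl ⟨ha, le_rfl⟩))⟩

/-- By (CE2), the last entries of later columns lie in strictly earlier rows. -/
lemma IsRRCEF.mem_piv_of_isLast (hM : IsRRCEF M) {r b : Fin n} (h : IsLast M r b) :
    (r, b) ∈ Piv M := by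
  refine ⟨h.1, fun ⟨a, c⟩ hlt => by_contra fun hne => ?_⟩
  obtain ⟨hra, hbc⟩ := Prod.mk_le_mk.mp hlt.le
  rcases hbc.eq_or_lt with rfl | hbc
  · exact hne (h.2 a (hra.lt_of_ne fun hra => hlt.ne (by rw [hra])))
  · obtain ⟨r', har', hr'⟩ := exists_le_isLast hne
    exact (hM.2.1 r b r' c h hr' hbc).not_ge (hra.trans har')

lemma IsRRCEF.exists_le_mem_piv (hM : IsRRCEF M) {a c : Fin n} (h : M a c ≠ 0) :
    ∃ r, a ≤ r ∧ (r, c) ∈ Piv M := by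
  obtain ⟨r, har, hr⟩ := exists_le_isLast h
  exact ⟨r, har, hM.mem_piv_of_isLast hr⟩

lemma IsRRCEF.row_eq_single (hM : IsRRCEF M) {r c : Fin n} (h : (r, c) ∈ Piv M) :
    M r = Pi.single c 1 := by
  obtain ⟨hone, hzero⟩ := hM.2.2 r c (isLast_of_mem_piv h)
  ext j
  rcases eq_or_ne j c with rfl | hj
  · rw [hone, Pi.single_eq_same]
  · rw [hzero j hj, Pi.single_eq_of_ne hj]

end Echelon

section Invariance

variable {α : Set (Fin n × Fin n)} {M N M' N' G H K : Matrix (Fin n) (Fin n) F}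

lemma sub_sub_mul_mul_transpose_eq (hH : IsUnit H) (h1 : M' = G * M * Hᵀ)
    (h2 : N' = G * N * Kᵀ) : M' - N' - G * (M - N) * Kᵀ = M' * (1 - K * H⁻¹)ᵀ := by
  have hHH : Hᵀ * H⁻¹ᵀ = 1 := by
    rw [← transpose_mul, nonsing_inv_mul H ((isUnit_iff_isUnit_det H).mp hH), transpose_one]
  subst h1 h2
  simp only [transpose_sub, transpose_mul, transpose_one, mul_sub, sub_mul, mul_one,
    ← Matrix.mul_assoc]
  rw [Matrix.mul_assoc (G * M) Hᵀ, hHH, mul_one]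
  abel

lemma one_sub_mul_inv_apply (hM' : IsRRCEF M') (hN' : IsRRCEF N') (hM'α : Piv M' = α)
    (hN'α : Piv N' = α) (hH : IsUnit H) (h1 : M' = G * M * Hᵀ) (h2 : N' = G * N * Kᵀ)
    {r c : Fin n} (hrc : (r, c) ∈ α) (b : Fin n) :
    (1 - K * H⁻¹) b c = -(G * (M - N) * Kᵀ) r b := by
  have hM'r := hM'.row_eq_single (hM'α ▸ hrc)
  have hrow := congrFun (congrFun (sub_sub_mul_mul_transpose_eq hH h1 h2) r) b
  rw [Matrix.sub_apply, Matrix.sub_apply, hM'r, hN'.row_eq_single (hN'α ▸ hrc), sub_self,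
    zero_sub, mul_apply' (M := M'), hM'r, single_one_dotProduct] at hrow
  exact hrow.symm

lemma sub_row_eq_zero (hM : IsRRCEF M) (hN : IsRRCEF N) (hMα : Piv M = α) (hNα : Piv N = α)
    {r c : Fin n} (hrc : (r, c) ∈ α) : (M - N) r = 0 := by
  change M r - N r = 0
  rw [hM.row_eq_single (hMα ▸ hrc), hN.row_eq_single (hNα ▸ hrc), sub_self]

lemma mul_mul_transpose_sub_apply_eq_zero (hM : IsRRCEF M) (hN : IsRRCEF N) (hMα : Piv M = α)
    (hNα : Piv N = α) (hGt : UpperTri G) (hKt : UpperTri K) {i j r c b : Fin n}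
    (hp : (i, j) ∈ Piv (M - N)) (hrc : (r, c) ∈ α) (hir : i ≤ r) (hjb : j ≤ b) :
    (G * (M - N) * Kᵀ) r b = 0 := by
  by_contra hne
  obtain ⟨q, hrbq, hq⟩ := hGt.exists_ne_zero_of_mul_mul_transpose_ne_zero hKt hne
  have hijq : (i, j) ≤ q := (Prod.mk_le_mk.mpr ⟨hir, hjb⟩).trans hrbq
  obtain rfl : q = (i, j) := by_contra fun h => hq (hp.2 q (lt_of_le_of_ne hijq (Ne.symm h)))
  obtain rfl : r = i := le_antisymm (Prod.mk_le_mk.mp hrbq).1 hir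
  exact hp.1 (congrFun (sub_row_eq_zero hM hN hMα hNα hrc) j)

lemma piv_sub_subset (hM : IsRRCEF M) (hN : IsRRCEF N) (hM' : IsRRCEF M') (hN' : IsRRCEF N')
    (hMα : Piv M = α) (hNα : Piv N = α) (hM'α : Piv M' = α) (hN'α : Piv N' = α)
    (hG : IsUnit G) (hH : IsUnit H) (hK : IsUnit K) (hGt : UpperTri G) (hKt : UpperTri K)
    (h1 : M' = G * M * Hᵀ) (h2 : N' = G * N * Kᵀ) : Piv (M - N) ⊆ Piv (M' - N') := by
  rintro ⟨i, j⟩ hp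
  refine mem_piv_of_eqOn_ge (fun ⟨a, b⟩ hab => ?_) (hGt.mem_piv_mul_mul_transpose hKt hG hK hp)
  obtain ⟨hia, hjb⟩ := Prod.mk_le_mk.mp hab
  have hE : (M' * (1 - K * H⁻¹)ᵀ : Matrix (Fin n) (Fin n) F) a b = 0 := by
    rw [mul_apply]
    refine Finset.sum_eq_zero fun c _ => ?_
    by_cases hac : M' a c = 0
    · rw [hac, zero_mul]
    obtain ⟨r, har, hrc⟩ := hM'.exists_le_mem_piv hac
    rw [hM'α] at hrc
    rw [transpose_apply, one_sub_mul_inv_apply hM' hN' hM'α hN'α hH h1 h2 hrc b,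
      mul_mul_transpose_sub_apply_eq_zero hM hN hMα hNα hGt hKt hp hrc (hia.trans har) hjb,
      neg_zero, mul_zero]
  have hdiff := congrFun (congrFun (sub_sub_mul_mul_transpose_eq hH h1 h2) a) b
  rw [hE, Matrix.sub_apply, sub_eq_zero] at hdiff
  exact hdiff.symm

lemma eq_inv_mul_mul_inv_transpose (hG : IsUnit G) (hH : IsUnit H) (h : M' = G * M * Hᵀ) :
    M = G⁻¹ * M' * H⁻¹ᵀ := by
  have hHT : IsUnit Hᵀ.det := by rwa [det_transpose, ← isUnit_iff_isUnit_det]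
  rw [h, transpose_nonsing_inv]
  simp only [Matrix.mul_assoc, mul_nonsing_inv _ hHT, mul_one]
  rw [← Matrix.mul_assoc, nonsing_inv_mul _ ((isUnit_iff_isUnit_det G).mp hG), one_mul]

end Invariance

theorem pivot_diff_invariant_general {F : Type*} [Field F] {n : ℕ}
    (α : Set (Fin n × Fin n))
    (M N M' N' : Matrix (Fin n) (Fin n) F)
    (hM : IsRRCEF M) (hN : IsRRCEF N) (hM' : IsRRCEF M') (hN' : IsRRCEF N')
    (hMα : Piv M = α) (hNα : Piv N = α) (hM'α : Piv M' = α) (hN'α : Piv N' = α)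
    (G H K : Matrix (Fin n) (Fin n) F)
    (hG : IsUnit G) (hH : IsUnit H) (hK : IsUnit K)
    (hGt : UpperTri G) (hKt : UpperTri K)
    (h1 : M' = G * M * Hᵀ) (h2 : N' = G * N * Kᵀ) :
    Piv (M - N) = Piv (M' - N') :=
  (piv_sub_subset hM hN hM' hN' hMα hNα hM'α hN'α hG hH hK hGt hKt h1 h2).antisymm
    (piv_sub_subset hM' hN' hM hN hM'α hN'α hMα hNα (isUnit_nonsing_inv_iff.mpr hG)
      (isUnit_nonsing_inv_iff.mpr hH) (isUnit_nonsing_inv_iff.mpr hK) hGt.inv hKt.inv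
      (eq_inv_mul_mul_inv_transpose hG hH h1) (eq_inv_mul_mul_inv_transpose hG hK h2))

theorem pivot_diff_invariant {F : Type*} [Field F] {n m : ℕ}
    (hm1 : 1 ≤ m) (hm2 : m ≤ n - 1)
    (α : Set (Fin n × Fin n)) (hanti : IsAntichain (· ≤ ·) α)
    (hcol : ∀ p ∈ α, (p.2 : ℕ) < m) (hcard : α.ncard = m)
    (M N M' N' : Matrix (Fin n) (Fin n) F)
    (hM : IsRRCEF M) (hN : IsRRCEF N) (hM' : IsRRCEF M') (hN' : IsRRCEF N')
    (hMα : Piv M = α) (hNα : Piv N = α) (hM'α : Piv M' = α) (hN'α : Piv N' = α)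
    (G H K : Matrix (Fin n) (Fin n) F)
    (hG : IsUnit G) (hH : IsUnit H) (hK : IsUnit K)
    (hGt : UpperTri G) (hHt : UpperTri H) (hKt : UpperTri K)
    (h1 : M' = G * M * Hᵀ) (h2 : N' = G * N * Kᵀ) :
    Piv (M - N) = Piv (M' - N') :=
  pivot_diff_invariant_general α M N M' N' hM hN hM' hN' hMα hNα hM'α hN'α G H K hG hH hK hGt hKt h1
    h2

end SchubertCell
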